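/- Let λ, μ, ν > 0 and let ∇ be the unique ℝ-bilinear map V × V → V satisfying the Koszul formula 2·h(∇_A B, C) = h(C, [A,B]) + h(B, [C,A]) − h(A, [B,C]) for all A, B, C ∈ V. Then ∇_X X = 0, ∇_X Y = ((−λ²+μ²+ν²)/(λμν))·Z, ∇_X Z = −((−λ²+μ²+ν²)/(λμν))·Y, ∇_Y X = ((−λ²+μ²−ν²)/(λμν))·Z, ∇_Y Y = 0, ∇_Y Z = −((λ²−μ²+ν²)/(λμν))·X, ∇_Z X = ((λ²+μ²−ν²)/(λμν))·Y, ∇_Z Y = ((λ²+μ²−ν²)/(λμν))·X, and ∇_Z Z = 0. -/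

import Mathlib

/-! In a Lorentzian frame with `[X,Y] = a Z`, `[Z,X] = b Y`, `[Y,Z] = −c X`, pairing the Koszul
formula with `X`, `Y`, `Z` gives every `∇_A B` as a combination of `(a ± b ± c)/2`; nondegeneracy
of `h` turns these pairings into the vectors themselves. Substituting `a = 2ν/(λμ)`,
`b = 2μ/(λν)`, `c = 2λ/(μν)` gives the stated coefficients. -/

/-- The Lorentzian scalar product on `ℝ³` with `h(X,X) = −1`, `h(Y,Y) = h(Z,Z) = 1`. -/
def hLor (v w : Fin 3 → ℝ) : ℝ := -(v 0 * w 0) + v 1 * w 1 + v 2 * w 2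

theorem eq_of_hLor_basis_eq {v w : Fin 3 → ℝ}
    (h0 : hLor v ![1, 0, 0] = hLor w ![1, 0, 0])
    (h1 : hLor v ![0, 1, 0] = hLor w ![0, 1, 0])
    (h2 : hLor v ![0, 0, 1] = hLor w ![0, 0, 1]) : v = w := by
  simp only [hLor, Matrix.cons_val_zero, Matrix.cons_val_one, Matrix.cons_val_two,
    Matrix.head_cons, Matrix.tail_cons, mul_one, mul_zero, add_zero] at h0 h1 h2
  funext i
  fin_cases i
  · simpa using h0
  · simpa using h1
  · simpa using h2

noncomputable def koszulForm (bracket : (Fin 3 → ℝ) →ₗ[ℝ] (Fin 3 → ℝ) →ₗ[ℝ] (Fin 3 → ℝ))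
    (A B C : Fin 3 → ℝ) : ℝ :=
  (hLor C (bracket A B) + hLor B (bracket C A) - hLor A (bracket B C)) / 2

theorem eq_of_koszulForm_basis_eq
    {bracket nabla : (Fin 3 → ℝ) →ₗ[ℝ] (Fin 3 → ℝ) →ₗ[ℝ] (Fin 3 → ℝ)}
    (hKoszul : ∀ A B C, 2 * hLor (nabla A B) C =
      hLor C (bracket A B) + hLor B (bracket C A) - hLor A (bracket B C))
    {A B v : Fin 3 → ℝ}
    (h0 : koszulForm bracket A B ![1, 0, 0] = hLor v ![1, 0, 0])
    (h1 : koszulForm bracket A B ![0, 1, 0] = hLor v ![0, 1, 0])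
    (h2 : koszulForm bracket A B ![0, 0, 1] = hLor v ![0, 0, 1]) : nabla A B = v := by
  have hnabla : ∀ C, hLor (nabla A B) C = koszulForm bracket A B C := fun C => by
    rw [koszulForm, ← hKoszul]; ring
  exact eq_of_hLor_basis_eq (by rw [hnabla, h0]) (by rw [hnabla, h1]) (by rw [hnabla, h2])

theorem levi_civita_of_structure_constants (a b c : ℝ)
    (bracket : (Fin 3 → ℝ) →ₗ[ℝ] (Fin 3 → ℝ) →ₗ[ℝ] (Fin 3 → ℝ))
    (halt : bracket.IsAlt)
    (hXY : bracket ![1, 0, 0] ![0, 1, 0] = a • ![0, 0, 1])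
    (hZX : bracket ![0, 0, 1] ![1, 0, 0] = b • ![0, 1, 0])
    (hYZ : bracket ![0, 1, 0] ![0, 0, 1] = -(c • ![1, 0, 0]))
    (nabla : (Fin 3 → ℝ) →ₗ[ℝ] (Fin 3 → ℝ) →ₗ[ℝ] (Fin 3 → ℝ))
    (hKoszul : ∀ A B C, 2 * hLor (nabla A B) C =
      hLor C (bracket A B) + hLor B (bracket C A) - hLor A (bracket B C)) :
    nabla ![1, 0, 0] ![1, 0, 0] = 0 ∧
    nabla ![1, 0, 0] ![0, 1, 0] = ((a + b - c) / 2) • ![0, 0, 1] ∧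
    nabla ![1, 0, 0] ![0, 0, 1] = -(((a + b - c) / 2) • ![0, 1, 0]) ∧
    nabla ![0, 1, 0] ![1, 0, 0] = ((b - a - c) / 2) • ![0, 0, 1] ∧
    nabla ![0, 1, 0] ![0, 1, 0] = 0 ∧
    nabla ![0, 1, 0] ![0, 0, 1] = -(((a - b + c) / 2) • ![1, 0, 0]) ∧
    nabla ![0, 0, 1] ![1, 0, 0] = ((b + c - a) / 2) • ![0, 1, 0] ∧
    nabla ![0, 0, 1] ![0, 1, 0] = ((b + c - a) / 2) • ![1, 0, 0] ∧
    nabla ![0, 0, 1] ![0, 0, 1] = 0 := by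
  have hYX := halt.neg ![1, 0, 0] ![0, 1, 0]
  have hXZ := halt.neg ![0, 0, 1] ![1, 0, 0]
  have hZY := halt.neg ![0, 1, 0] ![0, 0, 1]
  rw [hXY] at hYX
  rw [hZX] at hXZ
  rw [hYZ, neg_neg] at hZY
  refine ⟨?_, ?_, ?_, ?_, ?_, ?_, ?_, ?_, ?_⟩ <;>
    apply eq_of_koszulForm_basis_eq hKoszul <;>
    simp only [koszulForm, hLor, halt.self_eq_zero, hXY, hZX, hYZ, ← hYX, ← hXZ, ← hZY,
      Pi.smul_apply, Pi.neg_apply, Pi.zero_apply, smul_eq_mul, Matrix.cons_val_zero,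
      Matrix.cons_val_one, Matrix.cons_val_two, Matrix.head_cons, Matrix.tail_cons] <;>
    ring

theorem levi_civita_lorentzian_dual_space
    (l m n : ℝ) (hl : 0 < l) (hm : 0 < m) (hn : 0 < n)
    (X Y Z : Fin 3 → ℝ) (hX : X = ![1, 0, 0]) (hY : Y = ![0, 1, 0]) (hZ : Z = ![0, 0, 1])
    (bracket : (Fin 3 → ℝ) →ₗ[ℝ] (Fin 3 → ℝ) →ₗ[ℝ] (Fin 3 → ℝ))
    (halt : ∀ v, bracket v v = 0)
    (hXY : bracket X Y = (2 * n / (l * m)) • Z)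
    (hZX : bracket Z X = (2 * m / (l * n)) • Y)
    (hYZ : bracket Y Z = -((2 * l / (m * n)) • X))
    (nabla : (Fin 3 → ℝ) →ₗ[ℝ] (Fin 3 → ℝ) →ₗ[ℝ] (Fin 3 → ℝ))
    (hKoszul : ∀ A B C, 2 * hLor (nabla A B) C =
      hLor C (bracket A B) + hLor B (bracket C A) - hLor A (bracket B C)) :
    nabla X X = 0 ∧
    nabla X Y = ((-l ^ 2 + m ^ 2 + n ^ 2) / (l * m * n)) • Z ∧
    nabla X Z = -(((-l ^ 2 + m ^ 2 + n ^ 2) / (l * m * n)) • Y) ∧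
    nabla Y X = ((-l ^ 2 + m ^ 2 - n ^ 2) / (l * m * n)) • Z ∧
    nabla Y Y = 0 ∧
    nabla Y Z = -(((l ^ 2 - m ^ 2 + n ^ 2) / (l * m * n)) • X) ∧
    nabla Z X = ((l ^ 2 + m ^ 2 - n ^ 2) / (l * m * n)) • Y ∧
    nabla Z Y = ((l ^ 2 + m ^ 2 - n ^ 2) / (l * m * n)) • X ∧
    nabla Z Z = 0 := by
  subst hX hY hZ
  have hXY_coeff : (2 * n / (l * m) + 2 * m / (l * n) - 2 * l / (m * n)) / 2
      = (-l ^ 2 + m ^ 2 + n ^ 2) / (l * m * n) := by field_simp; ring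
  have hYX_coeff : (2 * m / (l * n) - 2 * n / (l * m) - 2 * l / (m * n)) / 2
      = (-l ^ 2 + m ^ 2 - n ^ 2) / (l * m * n) := by field_simp; ring
  have hYZ_coeff : (2 * n / (l * m) - 2 * m / (l * n) + 2 * l / (m * n)) / 2
      = (l ^ 2 - m ^ 2 + n ^ 2) / (l * m * n) := by field_simp; ring
  have hZX_coeff : (2 * m / (l * n) + 2 * l / (m * n) - 2 * n / (l * m)) / 2
      = (l ^ 2 + m ^ 2 - n ^ 2) / (l * m * n) := by field_simp; ring
  simpa only [hXY_coeff, hYX_coeff, hYZ_coeff, hZX_coeff] using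
    levi_civita_of_structure_constants _ _ _ bracket halt hXY hZX hYZ nabla hKoszul
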